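/- Let q be a prime power, F_{q^3} the cubic extension of F_q, and α in F_q. For any d in F_{q^3} with Tr(d) + Tr(d^{q^2+q}) + 1 + α = 0, one has N(d) + Tr(d)·α + α = -N(1 + d + d^q). -/

import Mathlib

/-!
The Galois group of `F_{q^3}/F_q` is generated by the Frobenius `σ x = x ^ q`, so `Tr` and `N`
are the first and third elementary symmetric functions of the conjugates `d, σ d, σ² d`, and
`Tr (d ^ (q ^ 2 + q)) = Tr (σ² d * σ d)` is the second one. Since
`1 + d + σ d = 1 + Tr d - σ² d`, the norm `N (1 + d + d ^ q)` is the value at `1 + Tr d` of the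
characteristic polynomial of `d`, and the claim becomes a polynomial identity in the conjugates.
-/

/-- With `u = 1 + a + b + c`, the three factors on the right are `u - c`, `u - a`, `u - b`, and
the hypothesis says `α = -(u + (a * b + b * c + c * a))`. -/
theorem cubic_symmetric_identity {R : Type*} [CommRing R] (a b c α : R)
    (h : a + b + c + (a * b + b * c + c * a) + 1 + α = 0) :
    a * b * c + (a + b + c) * α + α = -((1 + a + b) * (1 + b + c) * (1 + c + a)) := by
  linear_combination (1 + a + b + c) * h

namespace FiniteField

variable {F E : Type*} [Field F] [Fintype F] [Field E] [Fintype E] [Algebra F E]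

theorem finrank_eq_of_card_eq_pow {n : ℕ} (h : Fintype.card E = Fintype.card F ^ n) :
    Module.finrank F E = n :=
  Nat.pow_right_injective Fintype.one_lt_card (Module.card_eq_pow_finrank.symm.trans h)

local notation "σ" => frobeniusAlgHom F E

theorem frobeniusAlgHom_apply_apply_apply_of_finrank_eq_three (h : Module.finrank F E = 3)
    (x : E) : σ (σ (σ x)) = x := by
  have : σ ^ 3 = 1 := h ▸ orderOf_frobeniusAlgHom F E ▸ pow_orderOf_eq_one _
  exact congr($this x)

theorem algebraMap_trace_eq_of_finrank_eq_three (h : Module.finrank F E = 3) (x : E) :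
    algebraMap F E (Algebra.trace F E x) = x + σ x + σ (σ x) := by
  simp [algebraMap_trace_eq_sum_pow, h, Finset.sum_range_succ, Nat.card_eq_fintype_card,
    pow_succ, pow_mul]

theorem algebraMap_norm_eq_of_finrank_eq_three (h : Module.finrank F E = 3) (x : E) :
    algebraMap F E (Algebra.norm F x) = x * σ x * σ (σ x) := by
  simp [algebraMap_norm_eq_prod_pow, h, Finset.prod_range_succ, Nat.card_eq_fintype_card,
    pow_succ, pow_mul]

end FiniteField

open FiniteField in
/-- For `α ∈ F_q` and `d ∈ F_{q^3}` with `Tr(d) + Tr(d^{q^2+q}) + 1 + α = 0`, one has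
`N(d) + Tr(d)·α + α = -N(1 + d + d^q)`. -/
theorem stmt7 (F E : Type*) [Field F] [Field E] [Fintype F] [Fintype E] [Algebra F E]
    (q : ℕ) (hF : Fintype.card F = q) (hE : Fintype.card E = q ^ 3)
    (α : F) (d : E)
    (hd : Algebra.trace F E d + Algebra.trace F E (d ^ (q ^ 2 + q)) + 1 + α = 0) :
    Algebra.norm F d + Algebra.trace F E d * α + α = -Algebra.norm F (1 + d + d ^ q) := by
  subst hF
  have h3 : Module.finrank F E = 3 := finrank_eq_of_card_eq_pow hE
  have hσ (x : E) : x ^ Fintype.card F = frobeniusAlgHom F E x := rfl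
  rw [pow_add, sq, pow_mul, hσ, hσ] at hd
  rw [hσ]
  apply_fun algebraMap F E at hd
  apply (algebraMap F E).injective
  simp only [map_add, map_mul, map_neg, map_one, map_zero,
    algebraMap_trace_eq_of_finrank_eq_three h3, algebraMap_norm_eq_of_finrank_eq_three h3,
    frobeniusAlgHom_apply_apply_apply_of_finrank_eq_three h3] at hd ⊢
  generalize frobeniusAlgHom F E = σ at hd ⊢
  linear_combination cubic_symmetric_identity d (σ d) (σ (σ d)) (algebraMap F E α)
    (by linear_combination hd)
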